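/- In a one-to-one matching market with strict preferences, the matching produced by player-proposing deferred acceptance is player-optimal among stable matchings: every player weakly prefers its DA partner to its partner in any other stable matching. -/
import Mathlib


open Finset

/-- Some element of `S` minimizing `r` (or `none` if `S` is empty). -/
noncomputable def argminOf {α : Type*} (S : Finset α) (r : α → ℕ) : Option α :=
  if h : S.Nonempty then some (S.exists_min_image r h).choose else none

/-- One round of the player-proposing deferred acceptance algorithm (one-to-one market):
the state records, for each player, the set of arms that have rejected it so far.
Preferences are strict: lower rank value = more preferred, ranks injective. -/
noncomputable def daStep {N K : ℕ} (pRank : Fin N → Fin K → ℕ) (aRank : Fin K → Fin N → ℕ)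
    (rej : Fin N → Finset (Fin K)) : Fin N → Finset (Fin K) := fun p =>
  match argminOf (Finset.univ \ rej p) (pRank p) with
  | none => rej p
  | some a =>
      if argminOf (Finset.univ.filter
            (fun q : Fin N => argminOf (Finset.univ \ rej q) (pRank q) = some a)) (aRank a)
          = some p then
        rej p
      else insert a (rej p)

lemma argminOf_spec {α : Type*} {S : Finset α} {r : α → ℕ} {a : α}
    (h : argminOf S r = some a) : a ∈ S ∧ ∀ x ∈ S, r a ≤ r x := by
  by_cases hS : S.Nonempty
  · rw [argminOf, dif_pos hS] at h
    injection h with h; subst h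
    exact (S.exists_min_image r hS).choose_spec
  · rw [argminOf, dif_neg hS] at h; cases h

lemma argminOf_of_mem {α : Type*} {S : Finset α} (r : α → ℕ) {b : α} (hb : b ∈ S) :
    ∃ a, argminOf S r = some a ∧ r a ≤ r b := by
  have hS : S.Nonempty := ⟨b, hb⟩
  exact ⟨(S.exists_min_image r hS).choose, by rw [argminOf, dif_pos hS],
    (S.exists_min_image r hS).choose_spec.2 b hb⟩

lemma da_invariant {N K : ℕ}
    (pRank : Fin N → Fin K → ℕ) (aRank : Fin K → Fin N → ℕ)
    (hp : ∀ p, Function.Injective (pRank p)) (ha : ∀ a, Function.Injective (aRank a))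
    (M : Fin N → Option (Fin K))
    (hMinj : ∀ (p q : Fin N) (a : Fin K), M p = some a → M q = some a → p = q)
    (hMstable : ¬ ∃ (p : Fin N) (a : Fin K),
        M p ≠ some a ∧
        (∀ b, M p = some b → pRank p a < pRank p b) ∧
        (∀ q, M q = some a → aRank a p < aRank a q)) :
    ∀ (t : ℕ) (p : Fin N) (b : Fin K), M p = some b →
      b ∉ ((daStep pRank aRank)^[t] (fun _ => (∅ : Finset (Fin K)))) p := by
  intro t
  induction t with
  | zero => intro p b _ hb; simp at hb
  | succ t IH =>
    intro p b hMp hmem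
    rw [Function.iterate_succ_apply'] at hmem
    set rej := (daStep pRank aRank)^[t] (fun _ => (∅ : Finset (Fin K))) with hrej
    rw [daStep] at hmem
    rcases h1 : argminOf (Finset.univ \ rej p) (pRank p) with _ | a
    · rw [h1] at hmem
      exact IH p b hMp hmem
    · rw [h1] at hmem
      simp only at hmem
      split_ifs at hmem with h2
      · exact IH p b hMp hmem
      · rcases Finset.mem_insert.1 hmem with hba | hmem'
        · subst hba
          -- p proposed to b and was rejected; the accepted proposer q blocks M with b
          have hpfilter : p ∈ Finset.univ.filter
              (fun q : Fin N => argminOf (Finset.univ \ rej q) (pRank q) = some b) := by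
            simp [h1]
          obtain ⟨q, hq, hqle⟩ := argminOf_of_mem (aRank b) hpfilter
          have hqspec := argminOf_spec hq
          have hqprop : argminOf (Finset.univ \ rej q) (pRank q) = some b := by
            have := hqspec.1
            simpa using this
          have hqp : q ≠ p := fun h => h2 (h ▸ hq)
          have hlt : aRank b q < aRank b p :=
            lt_of_le_of_ne hqle (fun h => hqp (ha b h))
          have hMqb : M q ≠ some b := fun h => hqp (hMinj q p b h hMp)
          refine hMstable ⟨q, b, hMqb, ?_, ?_⟩
          · intro c hc
            have hc' : c ∉ rej q := IH q c hc
            have hcmem : c ∈ Finset.univ \ rej q := by simp [hc']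
            have hle := (argminOf_spec hqprop).2 c hcmem
            refine lt_of_le_of_ne hle (fun h => hMqb ?_)
            rw [hp q h] ; exact hc
          · intro q' hq'
            have : q' = p := hMinj q' p b hq' hMp
            subst this; exact hlt
        · exact IH p b hMp hmem'

/-- Gale–Shapley player-optimality: the matching produced by
player-proposing deferred acceptance is player-optimal among stable matchings: for any
other stable matching `M`, every player weakly prefers its DA partner to its partner
under `M`. -/
theorem da_player_optimal {N K : ℕ}
    (pRank : Fin N → Fin K → ℕ) (aRank : Fin K → Fin N → ℕ)
    (hp : ∀ p, Function.Injective (pRank p)) (ha : ∀ a, Function.Injective (aRank a))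
    (τ : ℕ) (rej : Fin N → Finset (Fin K))
    (hreach : rej = (daStep pRank aRank)^[τ] (fun _ => (∅ : Finset (Fin K))))
    (hfix : Function.IsFixedPt (daStep pRank aRank) rej)
    (matched : Fin N → Option (Fin K))
    (hmatched : ∀ p, matched p = argminOf (Finset.univ \ rej p) (pRank p))
    -- `M` is any matching (injective on arms) ...
    (M : Fin N → Option (Fin K))
    (hMinj : ∀ (p q : Fin N) (a : Fin K), M p = some a → M q = some a → p = q)
    -- ... which is stable (no blocking pair):
    (hMstable : ¬ ∃ (p : Fin N) (a : Fin K),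
        M p ≠ some a ∧
        (∀ b, M p = some b → pRank p a < pRank p b) ∧
        (∀ q, M q = some a → aRank a p < aRank a q)) :
    ∀ (p : Fin N) (b : Fin K), M p = some b →
      ∃ a, matched p = some a ∧ pRank p a ≤ pRank p b := by
  intro p b hMp
  have hb : b ∉ rej p := by
    rw [hreach]
    exact da_invariant pRank aRank hp ha M hMinj hMstable τ p b hMp
  have hbmem : b ∈ Finset.univ \ rej p := by simp [hb]
  obtain ⟨a, hargmin, hle⟩ := argminOf_of_mem (pRank p) hbmem
  exact ⟨a, (hmatched p).trans hargmin, hle⟩
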